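/- arXiv:1207.5701 — 5 statements merged into one kernel-verified Lean document; each statement's English description precedes it below -/
import Mathlib

section
/- For all integers n ≥ 4 and k ≥ 1, ν_k(K_n) = C(n,4) − max-k-cut(G_n), where max-k-cut(G_n) denotes the maximum, over all colorings of the vertices of G_n with k colors, of the number of edges of G_n whose endpoints receive distinct colors. -/
/-- The edges of the complete graph `K_n` with vertices `0, 1, …, n-1` on the spine,
represented as ordered pairs `(a, b)` with `a < b < n`. -/
def knEdges (n : ℕ) : Finset (ℕ × ℕ) :=
  (Finset.range n ×ˢ Finset.range n).filter (fun p => p.1 < p.2)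

/-- Given a page assignment `σ` of the edges of `K_n`, the number of (unordered) pairs of
edges that cross: two edges `(a,b)` and `(c,d)` (with `a<b`, `c<d`) cross iff they lie on the
same page and `a<c<b<d` or `c<a<d<b`; each crossing pair is counted once. -/
def pageCrossings (n : ℕ) (σ : ℕ × ℕ → ℕ) : ℕ :=
  ((knEdges n ×ˢ knEdges n).filter
    (fun p => σ p.1 = σ p.2 ∧ p.1.1 < p.2.1 ∧ p.2.1 < p.1.2 ∧ p.1.2 < p.2.2)).card

/-- The `k`-page crossing number of `K_n`: the minimum number of crossings over all
assignments of the edges of `K_n` to `k` pages. -/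
noncomputable def nuK (k n : ℕ) : ℕ :=
  sInf { m | ∃ σ : ℕ × ℕ → ℕ, (∀ e ∈ knEdges n, σ e < k) ∧ pageCrossings n σ = m }

/-- The chords of the `n`-cycle on vertices `0, 1, …, n-1`: pairs `(i, j)` with
`i < j ≤ n-1` whose endpoints are at cyclic distance at least 2. These are the
vertices of the graph `G_n`. -/
def chords (n : ℕ) : Finset (ℕ × ℕ) :=
  (Finset.range n ×ˢ Finset.range n).filter
    (fun p => p.1 + 2 ≤ p.2 ∧ ¬(p.1 = 0 ∧ p.2 = n - 1))

/-- Given a `k`-coloring `c` of the chords of the `n`-cycle, the number of (unordered)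
pairs of overlapping chords receiving distinct colors, i.e. the size of the corresponding
cut in `G_n`.  Two chords `(a,b)` and `(c,d)` (with `a<b`, `c<d`) overlap iff `a<c<b<d` or
`c<a<d<b`; each unordered overlapping pair is counted once. -/
def cutSize (n : ℕ) (c : ℕ × ℕ → ℕ) : ℕ :=
  ((chords n ×ˢ chords n).filter
    (fun p => c p.1 ≠ c p.2 ∧ p.1.1 < p.2.1 ∧ p.2.1 < p.1.2 ∧ p.1.2 < p.2.2)).card

/-- The maximum `k`-cut of the graph `G_n`: the maximum, over all colorings of the chords
of the `n`-cycle with `k` colors, of the number of overlapping pairs of chords whose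
endpoints receive distinct colors. -/
noncomputable def maxKCut (k n : ℕ) : ℕ :=
  sSup { m | ∃ c : ℕ × ℕ → ℕ, (∀ v ∈ chords n, c v < k) ∧ cutSize n c = m }

lemma mem_knEdges {n a b : ℕ} : (a, b) ∈ knEdges n ↔ a < b ∧ b < n := by
  simp only [knEdges, Finset.mem_filter, Finset.mem_product, Finset.mem_range]
  omega

lemma mem_chords {n a b : ℕ} :
    (a, b) ∈ chords n ↔ (a + 2 ≤ b ∧ b < n) ∧ ¬(a = 0 ∧ b = n - 1) := by
  simp only [chords, Finset.mem_filter, Finset.mem_product, Finset.mem_range]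
  omega

lemma chords_subset_knEdges {n : ℕ} : chords n ⊆ knEdges n := by
  intro p hp
  obtain ⟨a, b⟩ := p
  rw [mem_chords] at hp
  rw [mem_knEdges]
  omega

def crossPairs (n : ℕ) : Finset ((ℕ × ℕ) × (ℕ × ℕ)) :=
  (chords n ×ˢ chords n).filter
    (fun p => p.1.1 < p.2.1 ∧ p.2.1 < p.1.2 ∧ p.1.2 < p.2.2)

lemma pc_eq (n : ℕ) (σ : ℕ × ℕ → ℕ) :
    pageCrossings n σ = ((crossPairs n).filter (fun p => σ p.1 = σ p.2)).card := by
  unfold pageCrossings crossPairs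
  congr 1
  ext ⟨⟨a, b⟩, ⟨c, d⟩⟩
  simp only [Finset.mem_filter, Finset.mem_product, mem_knEdges, mem_chords]
  by_cases hP : σ (a, b) = σ (c, d) <;> simp [hP] <;> omega

lemma cut_eq (n : ℕ) (c : ℕ × ℕ → ℕ) :
    cutSize n c = ((crossPairs n).filter (fun p => ¬ c p.1 = c p.2)).card := by
  unfold cutSize crossPairs
  congr 1
  ext p
  simp only [Finset.mem_filter]
  tauto

lemma pc_add_cut (n : ℕ) (σ : ℕ × ℕ → ℕ) :
    pageCrossings n σ + cutSize n σ = (crossPairs n).card := by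
  rw [pc_eq, cut_eq]
  exact Finset.card_filter_add_card_filter_not _

lemma cut_congr {n : ℕ} {c c' : ℕ × ℕ → ℕ} (h : ∀ v ∈ chords n, c v = c' v) :
    cutSize n c = cutSize n c' := by
  unfold cutSize
  congr 1
  apply Finset.filter_congr
  rintro ⟨u, v⟩ hp
  rw [Finset.mem_product] at hp
  rw [h _ hp.1, h _ hp.2]

lemma crossPairs_card (n : ℕ) : (crossPairs n).card = n.choose 4 := by
  have key : (crossPairs n).card = ((Finset.range n).powersetCard 4).card := by
    apply Finset.card_bij (fun p _ => ({p.1.1, p.2.1, p.1.2, p.2.2} : Finset ℕ))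
    · rintro ⟨⟨a, b⟩, ⟨c, d⟩⟩ hp
      simp only [crossPairs, Finset.mem_filter, Finset.mem_product, mem_chords] at hp
      obtain ⟨⟨⟨⟨hab, hbn⟩, _⟩, ⟨hcd, hdn⟩, _⟩, h1, h2, h3⟩ := hp
      rw [Finset.mem_powersetCard]
      constructor
      · intro m hm
        simp only [Finset.mem_insert, Finset.mem_singleton] at hm
        rw [Finset.mem_range]
        omega
      · rw [Finset.card_insert_of_notMem (by
            simp only [Finset.mem_insert, Finset.mem_singleton]; omega),
          Finset.card_insert_of_notMem (by
            simp only [Finset.mem_insert, Finset.mem_singleton]; omega),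
          Finset.card_insert_of_notMem (by
            simp only [Finset.mem_singleton]; omega),
          Finset.card_singleton]
    · rintro ⟨⟨a, b⟩, ⟨c, d⟩⟩ hp ⟨⟨a', b'⟩, ⟨c', d'⟩⟩ hp' h
      simp only [crossPairs, Finset.mem_filter, Finset.mem_product, mem_chords] at hp hp'
      obtain ⟨⟨⟨⟨hab, hbn⟩, _⟩, ⟨hcd, hdn⟩, _⟩, h1, h2, h3⟩ := hp
      obtain ⟨⟨⟨⟨hab', hbn'⟩, _⟩, ⟨hcd', hdn'⟩, _⟩, h1', h2', h3'⟩ := hp'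
      simp only [Prod.mk.injEq] at h ⊢
      have m1 : a ∈ ({a', c', b', d'} : Finset ℕ) := by rw [← h]; simp
      have m2 : c ∈ ({a', c', b', d'} : Finset ℕ) := by rw [← h]; simp
      have m3 : b ∈ ({a', c', b', d'} : Finset ℕ) := by rw [← h]; simp
      have m4 : d ∈ ({a', c', b', d'} : Finset ℕ) := by rw [← h]; simp
      have m5 : a' ∈ ({a, c, b, d} : Finset ℕ) := by rw [h]; simp
      have m6 : c' ∈ ({a, c, b, d} : Finset ℕ) := by rw [h]; simp
      have m7 : b' ∈ ({a, c, b, d} : Finset ℕ) := by rw [h]; simp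
      have m8 : d' ∈ ({a, c, b, d} : Finset ℕ) := by rw [h]; simp
      simp only [Finset.mem_insert, Finset.mem_singleton] at m1 m2 m3 m4 m5 m6 m7 m8
      omega
    · intro s hs
      rw [Finset.mem_powersetCard] at hs
      obtain ⟨hsub, hcard⟩ := hs
      have hlen : (s.sort (· ≤ ·)).length = 4 := by rw [Finset.length_sort, hcard]
      have hsort := List.sortedLT_iff_pairwise.mp (Finset.sortedLT_sort s)
      have htf : (s.sort (· ≤ ·)).toFinset = s := Finset.sort_toFinset s _
      rcases hl : s.sort (· ≤ ·) with _ | ⟨w, _ | ⟨x, _ | ⟨y, _ | ⟨z, _ | _⟩⟩⟩⟩ <;>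
        rw [hl] at hlen <;> simp at hlen
      rw [hl] at hsort htf
      simp only [List.pairwise_cons, List.mem_cons, List.not_mem_nil, or_false,
        List.Pairwise.nil, and_true, List.mem_singleton] at hsort
      obtain ⟨hw, hx, hy, -⟩ := hsort
      have hwx : w < x := hw x (Or.inl rfl)
      have hwy : w < y := hw y (Or.inr (Or.inl rfl))
      have hwz : w < z := hw z (Or.inr (Or.inr rfl))
      have hxy : x < y := hx y (Or.inl rfl)
      have hxz : x < z := hx z (Or.inr rfl)
      have hyz : y < z := hy z rfl
      have hseq : s = ({w, x, y, z} : Finset ℕ) := by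
        rw [← htf]; simp
      have hwn : w < n := Finset.mem_range.mp (hsub (by rw [hseq]; simp))
      have hxn : x < n := Finset.mem_range.mp (hsub (by rw [hseq]; simp))
      have hyn : y < n := Finset.mem_range.mp (hsub (by rw [hseq]; simp))
      have hzn : z < n := Finset.mem_range.mp (hsub (by rw [hseq]; simp))
      refine ⟨((w, y), (x, z)), ?_, ?_⟩
      · simp only [crossPairs, Finset.mem_filter, Finset.mem_product, mem_chords]
        refine ⟨⟨⟨⟨by omega, by omega⟩, by omega⟩, ⟨by omega, by omega⟩, by omega⟩,
          by omega, by omega, by omega⟩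
      · rw [hseq]
  rw [key, Finset.card_powersetCard, Finset.card_range]

theorem nuK_eq_choose_sub_maxKCut (n k : ℕ) (hn : 4 ≤ n) (hk : 1 ≤ k) :
    nuK k n = n.choose 4 - maxKCut k n := by
  classical
  set B : Set ℕ := { m | ∃ c : ℕ × ℕ → ℕ, (∀ v ∈ chords n, c v < k) ∧ cutSize n c = m }
    with hBdef
  set A : Set ℕ := { m | ∃ σ : ℕ × ℕ → ℕ, (∀ e ∈ knEdges n, σ e < k) ∧ pageCrossings n σ = m }
    with hAdef
  have hnu : nuK k n = sInf A := rfl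
  have hmx : maxKCut k n = sSup B := rfl
  have hN : (crossPairs n).card = n.choose 4 := crossPairs_card n
  have hBbdd : BddAbove B := by
    refine ⟨n.choose 4, ?_⟩
    rintro m ⟨c, _, rfl⟩
    have := pc_add_cut n c
    omega
  have hBne : B.Nonempty := ⟨cutSize n (fun _ => 0), fun _ => 0, fun _ _ => hk, rfl⟩
  obtain ⟨c, hcb, hcs⟩ := Nat.sSup_mem hBne hBbdd
  set σ₀ : ℕ × ℕ → ℕ := fun e => if e ∈ chords n then c e else 0 with hσ₀def
  have hσ₀b : ∀ e ∈ knEdges n, σ₀ e < k := by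
    intro e _
    by_cases h : e ∈ chords n
    · simpa [σ₀, h] using hcb e h
    · simpa [σ₀, h] using (show 0 < k by omega)
  have hcut₀ : cutSize n σ₀ = cutSize n c := by
    apply cut_congr
    intro v hv
    simp [σ₀, hv]
  have hpc₀ : pageCrossings n σ₀ = n.choose 4 - sSup B := by
    have := pc_add_cut n σ₀
    rw [hcut₀, hcs] at this
    omega
  have h1 : sInf A ≤ n.choose 4 - sSup B := Nat.sInf_le ⟨σ₀, hσ₀b, hpc₀⟩
  have h2 : n.choose 4 - sSup B ≤ sInf A := by
    apply le_csInf
    · exact ⟨pageCrossings n σ₀, σ₀, hσ₀b, rfl⟩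
    rintro m ⟨σ, hσb, rfl⟩
    have hmem : cutSize n σ ∈ B :=
      ⟨σ, fun v hv => hσb v (chords_subset_knEdges hv), rfl⟩
    have hle : cutSize n σ ≤ sSup B := le_csSup hBbdd hmem
    have := pc_add_cut n σ
    omega
  rw [hnu, hmx]
  omega
end

section
/- For every integer k ≥ 1, the sequence n ↦ ν_k(K_n)/C(n,4), defined for n ≥ 4, converges as n → ∞; that is, there exists a real number L with ν_k(K_n)/C(n,4) → L. -/
namespace NuKAux

lemma mem_knEdges {n : ℕ} {p : ℕ × ℕ} : p ∈ knEdges n ↔ p.1 < p.2 ∧ p.2 < n := by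
  simp only [knEdges, Finset.mem_filter, Finset.mem_product, Finset.mem_range]
  omega

/-- the order embedding of `{0,…,n-1}` into `{0,…,n} \ {v}` -/
def fins (v x : ℕ) : ℕ := if x < v then x else x + 1

lemma fins_lt_iff (v : ℕ) {x y : ℕ} : fins v x < fins v y ↔ x < y := by
  unfold fins; split_ifs <;> omega

lemma fins_ne (v x : ℕ) : fins v x ≠ v := by
  unfold fins; split_ifs <;> omega

lemma fins_lt (v : ℕ) {n x : ℕ} (h : x < n) : fins v x < n + 1 := by
  unfold fins; split_ifs <;> omega

/-- the crossing count of the drawing induced by deleting vertex `v` equals the number of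
crossing pairs avoiding `v`. -/
lemma step_card (n v : ℕ) (hv : v < n + 1) (σ : ℕ × ℕ → ℕ) :
    pageCrossings n (fun e => σ (fins v e.1, fins v e.2)) =
    ((knEdges (n+1) ×ˢ knEdges (n+1)).filter
      (fun p => (σ p.1 = σ p.2 ∧ p.1.1 < p.2.1 ∧ p.2.1 < p.1.2 ∧ p.1.2 < p.2.2)
        ∧ p.1.1 ≠ v ∧ p.1.2 ≠ v ∧ p.2.1 ≠ v ∧ p.2.2 ≠ v)).card := by
  classical
  unfold pageCrossings
  apply Finset.card_bij
    (fun p _ => ((fins v p.1.1, fins v p.1.2), (fins v p.2.1, fins v p.2.2)))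
  · rintro ⟨⟨a, b⟩, ⟨c, d⟩⟩ hp
    rw [Finset.mem_filter, Finset.mem_product] at hp
    obtain ⟨⟨h1, h2⟩, hcr⟩ := hp
    rw [mem_knEdges] at h1 h2
    obtain ⟨hs, hac, hcb, hbd⟩ := hcr
    refine Finset.mem_filter.2 ⟨Finset.mem_product.2
      ⟨mem_knEdges.2 ⟨?_, ?_⟩, mem_knEdges.2 ⟨?_, ?_⟩⟩, ⟨?_, ?_, ?_, ?_⟩,
      fins_ne v a, fins_ne v b, fins_ne v c, fins_ne v d⟩
    · exact (fins_lt_iff v).2 h1.1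
    · exact fins_lt v h1.2
    · exact (fins_lt_iff v).2 h2.1
    · exact fins_lt v h2.2
    · exact hs
    · exact (fins_lt_iff v).2 hac
    · exact (fins_lt_iff v).2 hcb
    · exact (fins_lt_iff v).2 hbd
  · rintro ⟨⟨a, b⟩, ⟨c, d⟩⟩ _ ⟨⟨a', b'⟩, ⟨c', d'⟩⟩ _ h
    have hinj : Function.Injective (fins v) := by
      intro x y hxy; unfold fins at hxy; split_ifs at hxy <;> omega
    simp only [Prod.mk.injEq] at h
    simp only [Prod.mk.injEq]
    exact ⟨⟨hinj h.1.1, hinj h.1.2⟩, hinj h.2.1, hinj h.2.2⟩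
  · rintro ⟨⟨a, b⟩, ⟨c, d⟩⟩ hp
    rw [Finset.mem_filter, Finset.mem_product] at hp
    obtain ⟨⟨h1, h2⟩, hcr⟩ := hp
    rw [mem_knEdges] at h1 h2
    obtain ⟨⟨hs, hac, hcb, hbd⟩, hav, hbv, hcv, hdv⟩ := hcr
    set g : ℕ → ℕ := fun y => if y < v then y else y - 1 with hg
    have hgf : ∀ y, y ≠ v → fins v (g y) = y := by
      intro y hy; unfold fins; simp only [hg]; split_ifs <;> omega
    have hglt : ∀ y, y < n + 1 → y ≠ v → g y < n := by
      intro y hy1 hy2; simp only [hg]; split_ifs <;> omega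
    have e1 := hgf a hav; have e2 := hgf b hbv
    have e3 := hgf c hcv; have e4 := hgf d hdv
    refine ⟨((g a, g b), (g c, g d)), ?_, ?_⟩
    · refine Finset.mem_filter.2 ⟨Finset.mem_product.2
        ⟨mem_knEdges.2 ⟨?_, hglt b h1.2 hbv⟩, mem_knEdges.2 ⟨?_, hglt d h2.2 hdv⟩⟩,
        ?_, ?_, ?_, ?_⟩
      · rw [← fins_lt_iff v, e1, e2]; exact h1.1
      · rw [← fins_lt_iff v, e3, e4]; exact h2.1
      · show σ (fins v (g a), fins v (g b)) = σ (fins v (g c), fins v (g d))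
        rw [e1, e2, e3, e4]; exact hs
      · show g a < g c
        rw [← fins_lt_iff v, e1, e3]; exact hac
      · show g c < g b
        rw [← fins_lt_iff v, e3, e2]; exact hcb
      · show g b < g d
        rw [← fins_lt_iff v, e2, e4]; exact hbd
    · show ((fins v (g a), fins v (g b)), (fins v (g c), fins v (g d))) = ((a, b), (c, d))
      rw [e1, e2, e3, e4]

/-- summing crossing-pairs-avoiding-`v` over all `v` counts each crossing `n-3` times -/
lemma sum_avoid (n : ℕ) (hn : 4 ≤ n) (σ : ℕ × ℕ → ℕ) :
    ∑ v ∈ Finset.range (n+1),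
      ((knEdges (n+1) ×ˢ knEdges (n+1)).filter
        (fun p => (σ p.1 = σ p.2 ∧ p.1.1 < p.2.1 ∧ p.2.1 < p.1.2 ∧ p.1.2 < p.2.2)
          ∧ p.1.1 ≠ v ∧ p.1.2 ≠ v ∧ p.2.1 ≠ v ∧ p.2.2 ≠ v)).card
    = (n - 3) * pageCrossings (n+1) σ := by
  classical
  set T := (knEdges (n+1) ×ˢ knEdges (n+1)).filter
    (fun p => σ p.1 = σ p.2 ∧ p.1.1 < p.2.1 ∧ p.2.1 < p.1.2 ∧ p.1.2 < p.2.2) with hT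
  have hsplit : ∀ v, ((knEdges (n+1) ×ˢ knEdges (n+1)).filter
        (fun p => (σ p.1 = σ p.2 ∧ p.1.1 < p.2.1 ∧ p.2.1 < p.1.2 ∧ p.1.2 < p.2.2)
          ∧ p.1.1 ≠ v ∧ p.1.2 ≠ v ∧ p.2.1 ≠ v ∧ p.2.2 ≠ v))
      = T.filter (fun p => p.1.1 ≠ v ∧ p.1.2 ≠ v ∧ p.2.1 ≠ v ∧ p.2.2 ≠ v) := by
    intro v; rw [hT, Finset.filter_filter]
  calc ∑ v ∈ Finset.range (n+1), _
      = ∑ v ∈ Finset.range (n+1),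
          (T.filter (fun p => p.1.1 ≠ v ∧ p.1.2 ≠ v ∧ p.2.1 ≠ v ∧ p.2.2 ≠ v)).card := by
        exact Finset.sum_congr rfl (fun v _ => by rw [hsplit v])
    _ = ∑ v ∈ Finset.range (n+1), ∑ p ∈ T,
          (if p.1.1 ≠ v ∧ p.1.2 ≠ v ∧ p.2.1 ≠ v ∧ p.2.2 ≠ v then 1 else 0) := by
        exact Finset.sum_congr rfl (fun v _ => Finset.card_filter _ _)
    _ = ∑ p ∈ T, ∑ v ∈ Finset.range (n+1),
          (if p.1.1 ≠ v ∧ p.1.2 ≠ v ∧ p.2.1 ≠ v ∧ p.2.2 ≠ v then 1 else 0) :=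
        Finset.sum_comm
    _ = ∑ p ∈ T, (n - 3) := by
        apply Finset.sum_congr rfl
        rintro ⟨⟨a, b⟩, ⟨c, d⟩⟩ hp
        simp only [hT, Finset.mem_filter, Finset.mem_product, mem_knEdges] at hp
        obtain ⟨⟨⟨hab, hbn⟩, ⟨hcd, hdn⟩⟩, _, hac, hcb, hbd⟩ := hp
        rw [← Finset.card_filter]
        have heq : (Finset.range (n+1)).filter (fun v => a ≠ v ∧ b ≠ v ∧ c ≠ v ∧ d ≠ v)
            = Finset.range (n+1) \ {a, b, c, d} := by
          ext x
          simp only [Finset.mem_filter, Finset.mem_sdiff, Finset.mem_insert,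
            Finset.mem_singleton]
          tauto
        rw [heq, Finset.card_sdiff_of_subset]
        · have hcard : ({a, b, c, d} : Finset ℕ).card = 4 := by
            rw [Finset.card_insert_of_notMem (by simp; omega),
              Finset.card_insert_of_notMem (by simp; omega),
              Finset.card_insert_of_notMem (by simp; omega), Finset.card_singleton]
          rw [hcard, Finset.card_range]
          omega
        · intro x hx
          simp only [Finset.mem_insert, Finset.mem_singleton] at hx
          simp only [Finset.mem_range]
          omega
    _ = (n - 3) * pageCrossings (n+1) σ := by
        rw [Finset.sum_const, smul_eq_mul, mul_comm]; rfl

/-- the induced page assignment is valid -/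
lemma induced_valid {k n v : ℕ} {σ : ℕ × ℕ → ℕ} (hσ : ∀ e ∈ knEdges (n+1), σ e < k) :
    ∀ e ∈ knEdges n, (fun e : ℕ × ℕ => σ (fins v e.1, fins v e.2)) e < k := by
  intro e he
  rw [mem_knEdges] at he
  exact hσ _ (mem_knEdges.2 ⟨(fins_lt_iff v).2 he.1, fins_lt v he.2⟩)

lemma nuK_nonempty (k n : ℕ) (hk : 1 ≤ k) :
    {m | ∃ σ : ℕ × ℕ → ℕ, (∀ e ∈ knEdges n, σ e < k) ∧ pageCrossings n σ = m}.Nonempty :=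
  ⟨pageCrossings n (fun _ => 0), fun _ => 0, fun _ _ => hk, rfl⟩

/-- key recurrence: `(n+1) ν(n) ≤ (n-3) ν(n+1)` -/
lemma nuK_rec (k n : ℕ) (hk : 1 ≤ k) (hn : 4 ≤ n) :
    (n + 1) * nuK k n ≤ (n - 3) * nuK k (n + 1) := by
  obtain ⟨σ, hσval, hσeq⟩ := Nat.sInf_mem (nuK_nonempty k (n+1) hk)
  have hle : ∀ v ∈ Finset.range (n+1), nuK k n ≤
      ((knEdges (n+1) ×ˢ knEdges (n+1)).filter
        (fun p => (σ p.1 = σ p.2 ∧ p.1.1 < p.2.1 ∧ p.2.1 < p.1.2 ∧ p.1.2 < p.2.2)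
          ∧ p.1.1 ≠ v ∧ p.1.2 ≠ v ∧ p.2.1 ≠ v ∧ p.2.2 ≠ v)).card := by
    intro v hv
    rw [← step_card n v (Finset.mem_range.1 hv) σ]
    exact Nat.sInf_le ⟨_, induced_valid hσval, rfl⟩
  calc (n + 1) * nuK k n = ∑ _v ∈ Finset.range (n+1), nuK k n := by
        rw [Finset.sum_const, Finset.card_range, smul_eq_mul]
    _ ≤ ∑ v ∈ Finset.range (n+1),
          ((knEdges (n+1) ×ˢ knEdges (n+1)).filter
            (fun p => (σ p.1 = σ p.2 ∧ p.1.1 < p.2.1 ∧ p.2.1 < p.1.2 ∧ p.1.2 < p.2.2)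
              ∧ p.1.1 ≠ v ∧ p.1.2 ≠ v ∧ p.2.1 ≠ v ∧ p.2.2 ≠ v)).card :=
        Finset.sum_le_sum hle
    _ = (n - 3) * pageCrossings (n+1) σ := sum_avoid n hn σ
    _ = (n - 3) * nuK k (n + 1) := by rw [hσeq]; rfl

lemma choose_identity (n : ℕ) : (n + 1) * n.choose 4 = (n + 1).choose 4 * (n - 3) := by
  have h1 := Nat.add_one_mul_choose_eq n 4
  have h2 := Nat.choose_succ_right_eq (n + 1) 4
  have h3 : n + 1 - 4 = n - 3 := by omega
  rw [h3] at h2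
  rw [h1]
  exact h2

/-- crude bound `ν_k(K_n) ≤ n^4` -/
lemma nuK_le (k n : ℕ) (hk : 1 ≤ k) : nuK k n ≤ n ^ 4 := by
  have h1 : nuK k n ≤ pageCrossings n (fun _ => 0) :=
    Nat.sInf_le ⟨fun _ => 0, fun _ _ => hk, rfl⟩
  have h2 : pageCrossings n (fun _ => 0) ≤ (knEdges n ×ˢ knEdges n).card :=
    Finset.card_filter_le _ _
  have h3 : (knEdges n).card ≤ n * n := by
    calc (knEdges n).card ≤ (Finset.range n ×ˢ Finset.range n).card :=
          Finset.card_filter_le _ _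
      _ = n * n := by rw [Finset.card_product, Finset.card_range]
  calc nuK k n ≤ (knEdges n ×ˢ knEdges n).card := le_trans h1 h2
    _ = (knEdges n).card * (knEdges n).card := Finset.card_product _ _
    _ ≤ (n * n) * (n * n) := Nat.mul_le_mul h3 h3
    _ = n ^ 4 := by ring

lemma choose4_lower (n : ℕ) (hn : 6 ≤ n) : n ^ 4 ≤ 384 * n.choose 4 := by
  have h24 : 24 * n.choose 4 = n * (n - 1) * (n - 2) * (n - 3) := by
    have h := Nat.descFactorial_eq_factorial_mul_choose n 4
    rw [show Nat.factorial 4 = 24 from rfl] at h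
    rw [← h]
    simp only [Nat.descFactorial, Nat.sub_zero]
    ring
  have : 384 * n.choose 4 = 16 * (n * (n - 1) * (n - 2) * (n - 3)) := by omega
  rw [this]
  obtain ⟨m, rfl⟩ := Nat.exists_eq_add_of_le hn
  simp only [show 6 + m - 1 = 5 + m by omega,
    show 6 + m - 2 = 4 + m by omega, show 6 + m - 3 = 3 + m by omega]
  calc (6 + m) ^ 4 = (6 + m) * (6 + m) * (6 + m) * (6 + m) := by ring
    _ ≤ (6 + m) * (2 * (5 + m)) * (2 * (4 + m)) * (2 * (3 + m)) := by
        gcongr <;> omega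
    _ = 8 * ((6 + m) * (5 + m) * (4 + m) * (3 + m)) := by ring
    _ ≤ 16 * ((6 + m) * (5 + m) * (4 + m) * (3 + m)) :=
        Nat.mul_le_mul_right _ (by norm_num)

end NuKAux

theorem nuK_ratio_tendsto (k : ℕ) (hk : 1 ≤ k) :
    ∃ L : ℝ, Filter.Tendsto (fun n : ℕ => (nuK k n : ℝ) / (n.choose 4 : ℝ))
      Filter.atTop (nhds L) := by
  open NuKAux in
  set a : ℕ → ℝ := fun n => (nuK k n : ℝ) / (n.choose 4 : ℝ) with ha
  have hmono : Monotone a := by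
    apply monotone_nat_of_le_succ
    intro n
    by_cases hn : 4 ≤ n
    · have hrec := NuKAux.nuK_rec k n hk hn
      have hch := NuKAux.choose_identity n
      have hpos : (0 : ℝ) < (n.choose 4 : ℝ) := by
        exact_mod_cast Nat.choose_pos (by omega : 4 ≤ n)
      have hpos' : (0 : ℝ) < ((n+1).choose 4 : ℝ) := by
        exact_mod_cast Nat.choose_pos (by omega : 4 ≤ n + 1)
      rw [ha]
      rw [div_le_div_iff₀ hpos hpos']
      have hkey : nuK k n * ((n+1).choose 4) * (n - 3) ≤
          nuK k (n+1) * (n.choose 4) * (n - 3) := by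
        calc nuK k n * ((n+1).choose 4) * (n - 3)
            = ((n+1).choose 4 * (n - 3)) * nuK k n := by ring
          _ = ((n + 1) * n.choose 4) * nuK k n := by rw [hch]
          _ = n.choose 4 * ((n + 1) * nuK k n) := by ring
          _ ≤ n.choose 4 * ((n - 3) * nuK k (n+1)) := Nat.mul_le_mul_left _ hrec
          _ = nuK k (n+1) * (n.choose 4) * (n - 3) := by ring
      have h3 : 0 < n - 3 := by omega
      have hkey' : nuK k n * ((n+1).choose 4) ≤ nuK k (n+1) * (n.choose 4) :=
        Nat.le_of_mul_le_mul_right (by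
          calc nuK k n * ((n+1).choose 4) * (n - 3) ≤
              nuK k (n+1) * (n.choose 4) * (n - 3) := hkey) h3
      exact_mod_cast hkey'
    · have hz : (n.choose 4 : ℝ) = 0 := by
        norm_cast
        exact Nat.choose_eq_zero_of_lt (by omega)
      have : a n = 0 := by rw [ha]; simp [hz]
      rw [this]
      positivity
  have hbdd6 : ∀ n, 6 ≤ n → a n ≤ 384 := by
    intro n hn
    have h1 : (nuK k n : ℝ) ≤ (n : ℝ) ^ 4 := by exact_mod_cast NuKAux.nuK_le k n hk
    have h2 : ((n : ℝ)) ^ 4 ≤ 384 * (n.choose 4 : ℝ) := by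
      exact_mod_cast NuKAux.choose4_lower n hn
    have hpos : (0 : ℝ) < (n.choose 4 : ℝ) := by
      exact_mod_cast Nat.choose_pos (by omega : 4 ≤ n)
    rw [ha, div_le_iff₀ hpos]
    calc (nuK k n : ℝ) ≤ (n : ℝ) ^ 4 := h1
      _ ≤ 384 * (n.choose 4 : ℝ) := h2
  have hbdd : ∀ n, a n ≤ 384 := by
    intro n
    calc a n ≤ a (max n 6) := hmono (le_max_left n 6)
      _ ≤ 384 := hbdd6 _ (le_max_right n 6)
  refine ⟨⨆ n, a n, tendsto_atTop_ciSup hmono ⟨384, ?_⟩⟩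
  rintro x ⟨n, rfl⟩
  exact hbdd n
end

section
/- For all integers k ≥ 1 and r ≥ 1, one has k·r·Z_k(kr−1) = (kr−4)·Z_k(kr). -/
/-- The polynomial `F(r,n) = −r⁴/24 + nr³/12 − nr²/4 + 7r²/24 + nr/6 − r/4`,
i.e. `F(r,n) = Σ_{ℓ=0}^{r−1} (r−ℓ)·f_n(ℓ)` where `f_n(ℓ) = ℓn/2 − ℓ²/2 − n/2 + 1/2`. -/
def Fcr (r n : ℚ) : ℚ :=
  -r ^ 4 / 24 + n * r ^ 3 / 12 - n * r ^ 2 / 4 + 7 * r ^ 2 / 24 + n * r / 6 - r / 4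

/-- The number of crossings `Z_k(n)` of the DDS construction drawing `K_n` in `k` pages:
`Z_k(n) = (n mod k)·F(⌊n/k⌋+1, n) + (k − (n mod k))·F(⌊n/k⌋, n)`. -/
def Zpage (k n : ℕ) : ℚ :=
  ((n % k : ℕ) : ℚ) * Fcr (((n / k : ℕ) : ℚ) + 1) (n : ℚ)
    + ((k : ℚ) - ((n % k : ℕ) : ℚ)) * Fcr ((n / k : ℕ) : ℚ) (n : ℚ)
theorem Zpage_odd_even_identity (k r : ℕ) (hk : 1 ≤ k) (hr : 1 ≤ r) :
    (k : ℚ) * (r : ℚ) * Zpage k (k * r - 1) = ((k : ℚ) * (r : ℚ) - 4) * Zpage k (k * r) := by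
  have hkr : k * r - 1 = (k - 1) + (r - 1) * k := by
    have := Nat.one_le_iff_ne_zero.mp hk
    nlinarith [Nat.sub_add_cancel hk, Nat.sub_add_cancel hr,
      Nat.sub_add_cancel (Nat.one_le_iff_ne_zero.mpr (by positivity : k * r ≠ 0))]
  have h1 : (k * r - 1) % k = k - 1 := by
    rw [hkr, Nat.add_mul_mod_self_right, Nat.mod_eq_of_lt (by omega)]
  have h2 : (k * r - 1) / k = r - 1 := by
    rw [hkr, Nat.add_mul_div_right _ _ (by omega), Nat.div_eq_of_lt (by omega)]; omega
  have h3 : (k * r) % k = 0 := Nat.mul_mod_right k r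
  have h4 : (k * r) / k = r := Nat.mul_div_cancel_left r (by omega)
  simp only [Zpage, h1, h2, h3, h4, Fcr, Nat.cast_zero]
  have c1 : ((k * r - 1 : ℕ) : ℚ) = (k : ℚ) * r - 1 := by
    have : ((k * r - 1 : ℕ) : ℚ) = ((k * r : ℕ) : ℚ) - 1 := by
      rw [Nat.cast_sub (Nat.mul_pos hk hr)]; simp
    rw [this]; push_cast; ring
  have c2 : ((k - 1 : ℕ) : ℚ) = (k : ℚ) - 1 := by
    rw [Nat.cast_sub hk]; simp
  have c3 : ((r - 1 : ℕ) : ℚ) = (r : ℚ) - 1 := by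
    rw [Nat.cast_sub hr]; simp
  rw [c1, c2, c3]
  push_cast
  ring
end

section
/- For every integer k ≥ 1 there exists a constant C > 0 such that for all integers n ≥ 1, |Z_k(n) − (1/(12k²))·(1 − 1/(2k))·n⁴| ≤ C·n³; that is, Z_k(n) = (1/(12k²))(1 − 1/(2k))·n⁴ + O(n³). -/
lemma mono_bound (n s k : ℚ) (hn : 1 ≤ n) (hk : 1 ≤ k) (hs0 : 0 ≤ s) (hsk : s ≤ k)
    (a b c : ℕ) (ha : a ≤ 3) (hbc : b + c ≤ 5) : n^a * s^b * k^c ≤ n^3 * k^5 := by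
  have hn0 : (0:ℚ) ≤ n := le_trans zero_le_one hn
  have hk0 : (0:ℚ) ≤ k := le_trans zero_le_one hk
  calc n^a * s^b * k^c ≤ n^3 * k^b * k^c := by
        have h1 : n^a ≤ n^3 := pow_le_pow_right₀ hn ha
        have h2 : s^b ≤ k^b := pow_le_pow_left₀ hs0 hsk b
        exact mul_le_mul (mul_le_mul h1 h2 (by positivity) (by positivity)) le_rfl
          (by positivity) (by positivity)
    _ = n^3 * k^(b+c) := by rw [pow_add]; ring
    _ ≤ n^3 * k^5 := by
        have h3 : k^(b+c) ≤ k^5 := pow_le_pow_right₀ hk hbc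
        exact mul_le_mul_of_nonneg_left h3 (by positivity)

theorem Zpage_asymptotic (k : ℕ) (hk : 1 ≤ k) :
    ∃ C : ℚ, 0 < C ∧ ∀ n : ℕ, 1 ≤ n →
      |Zpage k n - (1 / (12 * (k : ℚ) ^ 2)) * (1 - 1 / (2 * (k : ℚ))) * (n : ℚ) ^ 4|
        ≤ C * (n : ℚ) ^ 3 := by
  refine ⟨5 * (k:ℚ), by positivity, fun n hn => ?_⟩
  set s : ℚ := ((n % k : ℕ) : ℚ) with hs_def
  set q : ℚ := ((n / k : ℕ) : ℚ) with hq_def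
  have hk1 : (1:ℚ) ≤ (k:ℚ) := by exact_mod_cast hk
  have hk0 : (0:ℚ) < (k:ℚ) := lt_of_lt_of_le zero_lt_one hk1
  have hn1 : (1:ℚ) ≤ (n:ℚ) := by exact_mod_cast hn
  have hs0 : (0:ℚ) ≤ s := by positivity
  have hsk : s ≤ (k:ℚ) := by
    rw [hs_def]
    exact_mod_cast (Nat.mod_lt n (show 0 < k from hk)).le
  have hdm : (k:ℚ) * q + s = (n:ℚ) := by
    rw [hs_def, hq_def]; exact_mod_cast Nat.div_add_mod n k
  have hqe : q = ((n:ℚ) - s) / (k:ℚ) := by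
    field_simp
    linarith [hdm]
  have hE : Zpage k n - (1 / (12 * (k : ℚ) ^ 2)) * (1 - 1 / (2 * (k : ℚ))) * (n : ℚ) ^ 4
      = ((6) * (n:ℚ)^0 * s^1 * (k:ℚ)^4 + (-3) * (n:ℚ)^0 * s^2 * (k:ℚ)^3 + (-6) * (n:ℚ)^0 * s^3 * (k:ℚ)^2 + (3) * (n:ℚ)^0 * s^4 * (k:ℚ)^1 + (-6) * (n:ℚ)^1 * s^0 * (k:ℚ)^4 + (-4) * (n:ℚ)^1 * s^1 * (k:ℚ)^3 + (-4) * (n:ℚ)^1 * s^1 * (k:ℚ)^4 + (12) * (n:ℚ)^1 * s^2 * (k:ℚ)^2 + (-8) * (n:ℚ)^1 * s^3 * (k:ℚ)^1 + (4) * (n:ℚ)^1 * s^3 * (k:ℚ)^2 + (7) * (n:ℚ)^2 * s^0 * (k:ℚ)^3 + (4) * (n:ℚ)^2 * s^0 * (k:ℚ)^4 + (-6) * (n:ℚ)^2 * s^1 * (k:ℚ)^2 + (6) * (n:ℚ)^2 * s^1 * (k:ℚ)^3 + (6) * (n:ℚ)^2 * s^2 * (k:ℚ)^1 + (-6) * (n:ℚ)^2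 * s^2 * (k:ℚ)^2 + (-6) * (n:ℚ)^3 * s^0 * (k:ℚ)^3) / (24 * (k:ℚ)^4) := by
    unfold Zpage Fcr
    rw [← hs_def, ← hq_def, hqe]
    field_simp
    ring
  have hb0 : (n:ℚ)^0 * s^1 * (k:ℚ)^4 ≤ (n:ℚ)^3 * (k:ℚ)^5 := mono_bound (n:ℚ) s (k:ℚ) hn1 hk1 hs0 hsk 0 1 4 (by norm_num) (by norm_num)
  have hp0 : (0:ℚ) ≤ (n:ℚ)^0 * s^1 * (k:ℚ)^4 := by positivity
  have hb1 : (n:ℚ)^0 * s^2 * (k:ℚ)^3 ≤ (n:ℚ)^3 * (k:ℚ)^5 := mono_bound (n:ℚ) s (k:ℚ) hn1 hk1 hs0 hsk 0 2 3 (by norm_num) (by norm_num)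
  have hp1 : (0:ℚ) ≤ (n:ℚ)^0 * s^2 * (k:ℚ)^3 := by positivity
  have hb2 : (n:ℚ)^0 * s^3 * (k:ℚ)^2 ≤ (n:ℚ)^3 * (k:ℚ)^5 := mono_bound (n:ℚ) s (k:ℚ) hn1 hk1 hs0 hsk 0 3 2 (by norm_num) (by norm_num)
  have hp2 : (0:ℚ) ≤ (n:ℚ)^0 * s^3 * (k:ℚ)^2 := by positivity
  have hb3 : (n:ℚ)^0 * s^4 * (k:ℚ)^1 ≤ (n:ℚ)^3 * (k:ℚ)^5 := mono_bound (n:ℚ) s (k:ℚ) hn1 hk1 hs0 hsk 0 4 1 (by norm_num) (by norm_num)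
  have hp3 : (0:ℚ) ≤ (n:ℚ)^0 * s^4 * (k:ℚ)^1 := by positivity
  have hb4 : (n:ℚ)^1 * s^0 * (k:ℚ)^4 ≤ (n:ℚ)^3 * (k:ℚ)^5 := mono_bound (n:ℚ) s (k:ℚ) hn1 hk1 hs0 hsk 1 0 4 (by norm_num) (by norm_num)
  have hp4 : (0:ℚ) ≤ (n:ℚ)^1 * s^0 * (k:ℚ)^4 := by positivity
  have hb5 : (n:ℚ)^1 * s^1 * (k:ℚ)^3 ≤ (n:ℚ)^3 * (k:ℚ)^5 := mono_bound (n:ℚ) s (k:ℚ) hn1 hk1 hs0 hsk 1 1 3 (by norm_num) (by norm_num)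
  have hp5 : (0:ℚ) ≤ (n:ℚ)^1 * s^1 * (k:ℚ)^3 := by positivity
  have hb6 : (n:ℚ)^1 * s^1 * (k:ℚ)^4 ≤ (n:ℚ)^3 * (k:ℚ)^5 := mono_bound (n:ℚ) s (k:ℚ) hn1 hk1 hs0 hsk 1 1 4 (by norm_num) (by norm_num)
  have hp6 : (0:ℚ) ≤ (n:ℚ)^1 * s^1 * (k:ℚ)^4 := by positivity
  have hb7 : (n:ℚ)^1 * s^2 * (k:ℚ)^2 ≤ (n:ℚ)^3 * (k:ℚ)^5 := mono_bound (n:ℚ) s (k:ℚ) hn1 hk1 hs0 hsk 1 2 2 (by norm_num) (by norm_num)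
  have hp7 : (0:ℚ) ≤ (n:ℚ)^1 * s^2 * (k:ℚ)^2 := by positivity
  have hb8 : (n:ℚ)^1 * s^3 * (k:ℚ)^1 ≤ (n:ℚ)^3 * (k:ℚ)^5 := mono_bound (n:ℚ) s (k:ℚ) hn1 hk1 hs0 hsk 1 3 1 (by norm_num) (by norm_num)
  have hp8 : (0:ℚ) ≤ (n:ℚ)^1 * s^3 * (k:ℚ)^1 := by positivity
  have hb9 : (n:ℚ)^1 * s^3 * (k:ℚ)^2 ≤ (n:ℚ)^3 * (k:ℚ)^5 := mono_bound (n:ℚ) s (k:ℚ) hn1 hk1 hs0 hsk 1 3 2 (by norm_num) (by norm_num)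
  have hp9 : (0:ℚ) ≤ (n:ℚ)^1 * s^3 * (k:ℚ)^2 := by positivity
  have hb10 : (n:ℚ)^2 * s^0 * (k:ℚ)^3 ≤ (n:ℚ)^3 * (k:ℚ)^5 := mono_bound (n:ℚ) s (k:ℚ) hn1 hk1 hs0 hsk 2 0 3 (by norm_num) (by norm_num)
  have hp10 : (0:ℚ) ≤ (n:ℚ)^2 * s^0 * (k:ℚ)^3 := by positivity
  have hb11 : (n:ℚ)^2 * s^0 * (k:ℚ)^4 ≤ (n:ℚ)^3 * (k:ℚ)^5 := mono_bound (n:ℚ) s (k:ℚ) hn1 hk1 hs0 hsk 2 0 4 (by norm_num) (by norm_num)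
  have hp11 : (0:ℚ) ≤ (n:ℚ)^2 * s^0 * (k:ℚ)^4 := by positivity
  have hb12 : (n:ℚ)^2 * s^1 * (k:ℚ)^2 ≤ (n:ℚ)^3 * (k:ℚ)^5 := mono_bound (n:ℚ) s (k:ℚ) hn1 hk1 hs0 hsk 2 1 2 (by norm_num) (by norm_num)
  have hp12 : (0:ℚ) ≤ (n:ℚ)^2 * s^1 * (k:ℚ)^2 := by positivity
  have hb13 : (n:ℚ)^2 * s^1 * (k:ℚ)^3 ≤ (n:ℚ)^3 * (k:ℚ)^5 := mono_bound (n:ℚ) s (k:ℚ) hn1 hk1 hs0 hsk 2 1 3 (by norm_num) (by norm_num)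
  have hp13 : (0:ℚ) ≤ (n:ℚ)^2 * s^1 * (k:ℚ)^3 := by positivity
  have hb14 : (n:ℚ)^2 * s^2 * (k:ℚ)^1 ≤ (n:ℚ)^3 * (k:ℚ)^5 := mono_bound (n:ℚ) s (k:ℚ) hn1 hk1 hs0 hsk 2 2 1 (by norm_num) (by norm_num)
  have hp14 : (0:ℚ) ≤ (n:ℚ)^2 * s^2 * (k:ℚ)^1 := by positivity
  have hb15 : (n:ℚ)^2 * s^2 * (k:ℚ)^2 ≤ (n:ℚ)^3 * (k:ℚ)^5 := mono_bound (n:ℚ) s (k:ℚ) hn1 hk1 hs0 hsk 2 2 2 (by norm_num) (by norm_num)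
  have hp15 : (0:ℚ) ≤ (n:ℚ)^2 * s^2 * (k:ℚ)^2 := by positivity
  have hb16 : (n:ℚ)^3 * s^0 * (k:ℚ)^3 ≤ (n:ℚ)^3 * (k:ℚ)^5 := mono_bound (n:ℚ) s (k:ℚ) hn1 hk1 hs0 hsk 3 0 3 (by norm_num) (by norm_num)
  have hp16 : (0:ℚ) ≤ (n:ℚ)^3 * s^0 * (k:ℚ)^3 := by positivity
  rw [hE, abs_div, abs_of_pos (show (0:ℚ) < 24 * (k:ℚ)^4 by positivity),
    div_le_iff₀ (show (0:ℚ) < 24 * (k:ℚ)^4 by positivity)]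
  rw [abs_le]
  constructor
  · linarith [hb0, hb1, hb2, hb3, hb4, hb5, hb6, hb7, hb8, hb9, hb10, hb11, hb12, hb13, hb14, hb15, hb16, hp0, hp1, hp2, hp3, hp4, hp5, hp6, hp7, hp8, hp9, hp10, hp11, hp12, hp13, hp14, hp15, hp16]
  · linarith [hb0, hb1, hb2, hb3, hb4, hb5, hb6, hb7, hb8, hb9, hb10, hb11, hb12, hb13, hb14, hb15, hb16, hp0, hp1, hp2, hp3, hp4, hp5, hp6, hp7, hp8, hp9, hp10, hp11, hp12, hp13, hp14, hp15, hp16]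
end

section
/- For every integer n ≥ 0: Z_3(n) = (n−6)(n−3)n(5n−9)/648 if n ≡ 0 (mod 3); Z_3(n) = (n−4)(n−1)(5n²−29n+30)/648 if n ≡ 1 (mod 3); and Z_3(n) = (n−2)(n−3)(n−5)(5n−4)/648 if n ≡ 2 (mod 3) (as rational numbers). -/
theorem Zpage_three (n : ℕ) :
    (n % 3 = 0 →
      Zpage 3 n = ((n : ℚ) - 6) * ((n : ℚ) - 3) * (n : ℚ) * (5 * (n : ℚ) - 9) / 648) ∧
    (n % 3 = 1 →
      Zpage 3 n = ((n : ℚ) - 4) * ((n : ℚ) - 1) * (5 * (n : ℚ) ^ 2 - 29 * (n : ℚ) + 30) / 648) ∧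
    (n % 3 = 2 →
      Zpage 3 n = ((n : ℚ) - 2) * ((n : ℚ) - 3) * ((n : ℚ) - 5) * (5 * (n : ℚ) - 4) / 648) := by
  refine ⟨fun h => ?_, fun h => ?_, fun h => ?_⟩ <;>
  · obtain ⟨q, hq⟩ : ∃ q, n = 3 * q + n % 3 := ⟨n / 3, by omega⟩
    rw [h] at hq
    have hdiv : n / 3 = q := by omega
    subst hq
    rw [Zpage, Fcr, Fcr, hdiv, h]
    push_cast
    ring
end
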